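/- In the two-point hypothesis-testing setting with κ ∈ [0,1], working posterior null probability Ṗ₀ ∈ (0,1), lower bound P̲₀ ≤ Ṗ₀, and p-value p ∈ (0,1), the moderate posterior null probability minimizing the binary KL divergence to the confidence posterior over the mixture interval [κP̲₀ + (1−κ)Ṗ₀, κ + (1−κ)Ṗ₀) equals: κP̲₀ + (1−κ)Ṗ₀ if p < κP̲₀ + (1−κ)Ṗ₀; p if κP̲₀ + (1−κ)Ṗ₀ ≤ p ≤ κ + (1−κ)Ṗ₀; and κ + (1−κ)Ṗ₀ if p > κ + (1−κ)Ṗ₀. -/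

import Mathlib

/-!
Writing `binKL q p = p · klFun (q / p) + (1 - p) · klFun ((1 - q) / (1 - p))` with
`klFun x = x log x + 1 - x` convex and minimal at `1`, the map `q ↦ binKL q p` is antitone on
`[0, p]`, monotone on `[p, 1]` and vanishes at `p`. Its minimum over an interval in `[0, 1]` is
therefore attained at the point of the interval nearest to `p`.
-/

open Set InformationTheory

/-- Binary Kullback-Leibler divergence `d(q, p) = q log(q/p) + (1-q) log((1-q)/(1-p))`. -/
noncomputable def binKL (q p : ℝ) : ℝ :=
  q * Real.log (q / p) + (1 - q) * Real.log ((1 - q) / (1 - p))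

section ConvexMinimum

variable {𝕜 β : Type*} [Field 𝕜] [LinearOrder 𝕜] [IsStrictOrderedRing 𝕜]
  [AddCommMonoid β] [LinearOrder β] [IsOrderedCancelAddMonoid β] [Module 𝕜 β]
  [PosSMulStrictMono 𝕜 β] {s : Set 𝕜} {f : 𝕜 → β} {m : 𝕜}

theorem ConvexOn.monotoneOn_of_isMinOn (hf : ConvexOn 𝕜 s f) (hmin : IsMinOn f s m)
    (hm : m ∈ s) : MonotoneOn f (s ∩ Ici m) := by
  rintro y ⟨-, hmy⟩ z ⟨hz, -⟩ hyz
  rcases hmy.eq_or_lt with rfl | hmy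
  · exact hmin hz
  · exact hf.le_right_of_left_le'' hm hz hmy hyz (hmin (hf.1.ordConnected.out hm hz ⟨hmy.le, hyz⟩))

theorem ConvexOn.antitoneOn_of_isMinOn (hf : ConvexOn 𝕜 s f) (hmin : IsMinOn f s m)
    (hm : m ∈ s) : AntitoneOn f (s ∩ Iic m) := by
  rintro x ⟨hx, -⟩ y ⟨-, hym⟩ hxy
  rcases hym.eq_or_lt with rfl | hym
  · exact hmin hx
  · exact hf.le_left_of_right_le'' hx hm hxy hym (hmin (hf.1.ordConnected.out hx hm ⟨hxy, hym.le⟩))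

end ConvexMinimum

lemma monotoneOn_klFun : MonotoneOn klFun (Ici 1) := by
  simpa [inter_eq_right.2 (Ici_subset_Ici.2 zero_le_one)] using
    convexOn_klFun.monotoneOn_of_isMinOn isMinOn_klFun (mem_Ici.2 zero_le_one)

lemma antitoneOn_klFun : AntitoneOn klFun (Icc 0 1) :=
  convexOn_klFun.antitoneOn_of_isMinOn isMinOn_klFun (mem_Ici.2 zero_le_one)

lemma binKL_eq_klFun {p : ℝ} (hp₀ : p ≠ 0) (hp₁ : p ≠ 1) (q : ℝ) :
    binKL q p = p * klFun (q / p) + (1 - p) * klFun ((1 - q) / (1 - p)) := by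
  have hp₁' : 1 - p ≠ 0 := sub_ne_zero.2 hp₁.symm
  simp only [binKL, klFun_apply]
  field_simp
  ring

@[simp]
lemma binKL_self (p : ℝ) : binKL p p = 0 := by
  simp [binKL]

lemma binKL_nonneg {p q : ℝ} (hp : p ∈ Ioo 0 1) (hq : q ∈ Icc 0 1) : 0 ≤ binKL q p := by
  obtain ⟨hp₀, hp₁⟩ := hp
  obtain ⟨hq₀, hq₁⟩ := hq
  rw [binKL_eq_klFun hp₀.ne' hp₁.ne]
  have hp₁' : 0 < 1 - p := sub_pos.2 hp₁
  have hnull := klFun_nonneg (div_nonneg hq₀ hp₀.le)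
  have halt := klFun_nonneg (div_nonneg (sub_nonneg.2 hq₁) hp₁'.le)
  positivity

lemma binKL_monotoneOn {p : ℝ} (hp : p ∈ Ioo 0 1) : MonotoneOn (binKL · p) (Icc p 1) := by
  obtain ⟨hp₀, hp₁⟩ := hp
  have hp₁' : 0 < 1 - p := sub_pos.2 hp₁
  rintro x ⟨hpx, hx₁⟩ y ⟨hpy, hy₁⟩ hxy
  simp only [binKL_eq_klFun hp₀.ne' hp₁.ne]
  have hnull : klFun (x / p) ≤ klFun (y / p) :=
    monotoneOn_klFun ((one_le_div hp₀).2 hpx) ((one_le_div hp₀).2 hpy) (by gcongr)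
  have halt : klFun ((1 - x) / (1 - p)) ≤ klFun ((1 - y) / (1 - p)) :=
    antitoneOn_klFun ⟨by bound, (div_le_one hp₁').2 (by linarith)⟩
      ⟨by bound, (div_le_one hp₁').2 (by linarith)⟩ (by gcongr)
  gcongr

lemma binKL_antitoneOn {p : ℝ} (hp : p ∈ Ioo 0 1) : AntitoneOn (binKL · p) (Icc 0 p) := by
  obtain ⟨hp₀, hp₁⟩ := hp
  have hp₁' : 0 < 1 - p := sub_pos.2 hp₁
  rintro x ⟨hx₀, hxp⟩ y ⟨hy₀, hyp⟩ hxy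
  simp only [binKL_eq_klFun hp₀.ne' hp₁.ne]
  have hnull : klFun (y / p) ≤ klFun (x / p) :=
    antitoneOn_klFun ⟨by positivity, (div_le_one hp₀).2 hxp⟩
      ⟨by positivity, (div_le_one hp₀).2 hyp⟩ (by gcongr)
  have halt : klFun ((1 - y) / (1 - p)) ≤ klFun ((1 - x) / (1 - p)) :=
    monotoneOn_klFun ((one_le_div hp₁').2 (by linarith)) ((one_le_div hp₁').2 (by linarith))
      (by gcongr)
  gcongr

theorem moderate_posterior_null_prob_general
    (κ P₀lb Pdot₀ p : ℝ) (hκ₁ : κ ≤ 1)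
    (hPdot₀ : Pdot₀ ∈ Set.Ioo (0:ℝ) 1) (hlb₀ : 0 < P₀lb) (hlb : P₀lb ≤ Pdot₀)
    (hp : p ∈ Set.Ioo (0:ℝ) 1) :
    ∀ q ∈ Set.Ico (κ * P₀lb + (1 - κ) * Pdot₀) (κ + (1 - κ) * Pdot₀),
      binKL (if p < κ * P₀lb + (1 - κ) * Pdot₀ then κ * P₀lb + (1 - κ) * Pdot₀
             else if p ≤ κ + (1 - κ) * Pdot₀ then p
             else κ + (1 - κ) * Pdot₀) p ≤ binKL q p := by
  rintro q ⟨hLq, hqR⟩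
  set L := κ * P₀lb + (1 - κ) * Pdot₀
  set R := κ + (1 - κ) * Pdot₀
  have hL : 0 ≤ L := by linarith [mul_nonneg (sub_nonneg.2 hκ₁) (sub_nonneg.2 hlb)]
  have hR : R ≤ 1 := by linarith [mul_nonneg (sub_nonneg.2 hκ₁) (sub_nonneg.2 hPdot₀.2.le)]
  have hq : q ∈ Icc 0 1 := ⟨hL.trans hLq, hqR.le.trans hR⟩
  split_ifs with hpL hpR
  · exact binKL_monotoneOn hp ⟨hpL.le, (hLq.trans hqR.le).trans hR⟩ ⟨hpL.le.trans hLq, hq.2⟩ hLq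
  · simpa using binKL_nonneg hp hq
  · have hRp : R ≤ p := (not_le.1 hpR).le
    exact binKL_antitoneOn hp ⟨hq.1, hqR.le.trans hRp⟩ ⟨hq.1.trans hqR.le, hRp⟩ hqR.le

/-- The moderate posterior null probability at caution `κ`: minimizing the binary KL
divergence to the confidence posterior (null probability `p`) over the mixture interval
`[κ P̲₀ + (1-κ) Pdot₀, κ + (1-κ) Pdot₀)` gives `κ P̲₀ + (1-κ) Pdot₀` if `p` is below the interval,
`p` if `p` is inside, and `κ + (1-κ) Pdot₀` if `p` is above. -/
theorem moderate_posterior_null_prob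
    (κ P₀lb Pdot₀ p : ℝ) (hκ₀ : 0 ≤ κ) (hκ₁ : κ ≤ 1)
    (hPdot₀ : Pdot₀ ∈ Set.Ioo (0:ℝ) 1) (hlb₀ : 0 < P₀lb) (hlb : P₀lb ≤ Pdot₀)
    (hp : p ∈ Set.Ioo (0:ℝ) 1) :
    ∀ q ∈ Set.Ico (κ * P₀lb + (1 - κ) * Pdot₀) (κ + (1 - κ) * Pdot₀),
      binKL (if p < κ * P₀lb + (1 - κ) * Pdot₀ then κ * P₀lb + (1 - κ) * Pdot₀
             else if p ≤ κ + (1 - κ) * Pdot₀ then p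
             else κ + (1 - κ) * Pdot₀) p ≤ binKL q p :=
  moderate_posterior_null_prob_general κ P₀lb Pdot₀ p hκ₁ hPdot₀ hlb₀ hlb hp
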